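/- arXiv:1003.2425 — 2 statements merged into one kernel-verified Lean document; each statement's English description precedes it below -/
import Mathlib

section
/- If the principle C_s holds, then Split has a winning strategy in the stationary set splitting game SG. -/
noncomputable section

/-- The first uncountable ordinal. -/
def omega1 : Ordinal := (Cardinal.aleph 1).ord

/-- `C ⊆ ω₁` is club: unbounded in `ω₁` and closed (every limit `α < ω₁` with
`sup (C ∩ α) = α` belongs to `C`). -/
def IsClubSet (C : Set Ordinal) : Prop :=
  C ⊆ Set.Iio omega1 ∧
  (∀ α < omega1, ∃ β ∈ C, α < β) ∧
  (∀ α < omega1, Order.IsSuccLimit α → sSup (C ∩ Set.Iio α) = α → α ∈ C)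

/-- `S ⊆ ω₁` is stationary: it meets every club subset of `ω₁`. -/
def IsStat (S : Set Ordinal) : Prop :=
  S ⊆ Set.Iio omega1 ∧ ∀ C, IsClubSet C → (S ∩ C).Nonempty

/-- A run of the stationary set splitting game `SG`, coded by a pair of
disjoint subsets `A, B` of `ω₁` (the accepted set is `E = A ∪ B`). -/
def SGRun (A B : Set Ordinal) : Prop :=
  A ⊆ Set.Iio omega1 ∧ B ⊆ Set.Iio omega1 ∧ Disjoint A B

/-- Split wins the run `(A, B)` if `A ∪ B` is nonstationary or both `A` and `B`
are stationary. -/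
def SplitWins (A B : Set Ordinal) : Prop :=
  ¬ IsStat (A ∪ B) ∨ (IsStat A ∧ IsStat B)

/-- The run `(A, B)` is played according to Split's strategy `τ`
(`true` = put into `A`): for every accepted `α`, `α ∈ A` iff `τ` says so on the
position `(A ∩ α, B ∩ α)`. -/
def PlayedBySplit (τ : Ordinal → Set Ordinal → Set Ordinal → Bool)
    (A B : Set Ordinal) : Prop :=
  ∀ α ∈ A ∪ B, (α ∈ A ↔ τ α (A ∩ Set.Iio α) (B ∩ Set.Iio α) = true)

/-- `τ` is a winning strategy for Split. -/
def SplitWinning (τ : Ordinal → Set Ordinal → Set Ordinal → Bool) : Prop :=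
  ∀ A B, SGRun A B → PlayedBySplit τ A B → SplitWins A B

/-- The run `(A, B)` is played according to Unsplit's strategy `υ`
(`true` = accept): for every `α < ω₁`, `α` is accepted iff `υ` says so on the
position `(A ∩ α, B ∩ α)`. -/
def PlayedByUnsplit (υ : Ordinal → Set Ordinal → Set Ordinal → Bool)
    (A B : Set Ordinal) : Prop :=
  ∀ α < omega1, (α ∈ A ∪ B ↔ υ α (A ∩ Set.Iio α) (B ∩ Set.Iio α) = true)

/-- `υ` is a winning strategy for Unsplit. -/
def UnsplitWinning (υ : Ordinal → Set Ordinal → Set Ordinal → Bool) : Prop :=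
  ∀ A B, SGRun A B → PlayedByUnsplit υ A B → ¬ SplitWins A B

/-- A set of ordinals has order type `ω`. -/
def OTypeOmega (s : Set Ordinal) : Prop :=
  Ordinal.type ((· < ·) : s → s → Prop) = Ordinal.omega0

/-- The family `⟨a α β : β < γ α⟩` (for `α < ω₁` limit) witnesses `C_s`:
each `a α β` is a cofinal subset of `α` of order type `ω`; the family is
`⊆`-decreasing mod finite in `β`; and for every club `C` and stationary `E`
some `a α β` with `α ∈ E` has `a α β \ C` finite and `a α β ∩ E` infinite. -/
def CsWitness (γ : Ordinal → Ordinal) (a : Ordinal → Ordinal → Set Ordinal) : Prop :=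
  (∀ α, α < omega1 → Order.IsSuccLimit α →
    γ α < omega1 ∧
    ∀ β < γ α, a α β ⊆ Set.Iio α ∧ (∀ ξ < α, ∃ η ∈ a α β, ξ < η) ∧ OTypeOmega (a α β)) ∧
  (∀ α, α < omega1 → Order.IsSuccLimit α → ∀ β β', β < β' → β' < γ α → (a α β' \ a α β).Finite) ∧
  (∀ C E : Set Ordinal, IsClubSet C → IsStat E →
    ∃ α β, α < omega1 ∧ Order.IsSuccLimit α ∧ α ∈ E ∧ β < γ α ∧
      (a α β \ C).Finite ∧ (a α β ∩ E).Infinite)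

/-- The principle `C_s`. -/
def Cs : Prop :=
  ∃ (γ : Ordinal.{0} → Ordinal.{0}) (a : Ordinal.{0} → Ordinal.{0} → Set Ordinal.{0}), CsWitness γ a

/-- The sequence `⟨σ α : α < ω₁⟩` witnesses `D_u`: it is a `◊`-sequence, and
for every `E ⊆ ω₁` there is a club `C` such that either every `α ∈ C` guessing
`E` lies in `E`, or every `α ∈ C` guessing `E` lies outside `E`. -/
def DuWitness (σ : Ordinal → Set Ordinal) : Prop :=
  (∀ α < omega1, σ α ⊆ Set.Iio α) ∧
  (∀ A : Set Ordinal, A ⊆ Set.Iio omega1 →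
    IsStat {α | α < omega1 ∧ A ∩ Set.Iio α = σ α}) ∧
  (∀ E : Set Ordinal, E ⊆ Set.Iio omega1 →
    ∃ C, IsClubSet C ∧
      ((∀ α ∈ C, E ∩ Set.Iio α = σ α → α ∈ E) ∨
       (∀ α ∈ C, E ∩ Set.Iio α = σ α → α ∉ E)))

/-- The principle `D_u`. -/
def Du : Prop := ∃ σ : Ordinal.{0} → Set Ordinal.{0}, DuWitness σ

/-! Split answers at `α` by looking at the ladders `a α β`: put `α` into `A` iff some ladder meets
the current `B` infinitely often but the current `A` only finitely often. Given a club `C` missing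
`A` (or `B`) on a stationary `E = A ∪ B`, `C_s` yields `α ∈ E` and a ladder `a α β` almost
contained in `C` meeting `E` infinitely often; closure of `C` puts `α` into `C`, the ladder then
meets only the other side infinitely often, and (using that the ladders at `α` are almost
comparable) the strategy puts `α` on the side that `C` misses, a contradiction. -/

lemma Set.finite_inter_of_finite_diff {ι : Type*} {s t X : Set ι} (hst : (s \ t).Finite)
    (ht : (t ∩ X).Finite) : (s ∩ X).Finite :=
  (hst.union ht).subset fun x hx => by
    by_cases hxt : x ∈ t
    · exact Or.inr ⟨hxt, hx.2⟩
    · exact Or.inl ⟨hx.1, hxt⟩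

lemma Set.infinite_inter_right_of_finite_left {ι : Type*} {s A B : Set ι}
    (h : (s ∩ (A ∪ B)).Infinite) (hA : (s ∩ A).Finite) : (s ∩ B).Infinite := fun hB =>
  h (by rw [Set.inter_union_distrib_left]; exact hA.union hB)

lemma exists_mem_diff_gt_of_finite {ι : Type*} [LinearOrder ι] {a F : Set ι} {α : ι}
    (ha : a ⊆ Set.Iio α) (hcof : ∀ ξ < α, ∃ η ∈ a, ξ < η) (hF : F.Finite) :
    ∀ ξ < α, ∃ η ∈ a \ F, ξ < η := by
  intro ξ hξ
  obtain ⟨m, hm, hmax⟩ := Set.exists_max_image (insert ξ (F ∩ a)) id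
    ((hF.inter_of_left a).insert ξ) (Set.insert_nonempty ξ _)
  have hmα : m < α := by
    rcases hm with rfl | hm
    · exact hξ
    · exact ha hm.2
  obtain ⟨η, hηa, hmη⟩ := hcof m hmα
  refine ⟨η, ⟨hηa, fun hηF => ?_⟩, (hmax ξ (Set.mem_insert ξ _)).trans_lt hmη⟩
  exact (hmax η (Set.mem_insert_of_mem ξ ⟨hηF, hηa⟩)).not_gt hmη

lemma sSup_inter_Iio_eq {ι : Type*} [ConditionallyCompleteLinearOrderBot ι] {X : Set ι} {α : ι}
    (h : ∀ ξ < α, ∃ η ∈ X, ξ < η ∧ η < α) : sSup (X ∩ Set.Iio α) = α := by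
  refine le_antisymm (csSup_le' fun x hx => hx.2.le) (le_of_not_gt fun hlt => ?_)
  obtain ⟨η, hηX, hltη, hηα⟩ := h _ hlt
  exact hltη.not_ge (le_csSup ⟨α, fun x hx => hx.2.le⟩ ⟨hηX, hηα⟩)

lemma IsClubSet.mem_of_finite_diff {C a : Set Ordinal} {α : Ordinal} (hC : IsClubSet C)
    (hα : α < omega1) (hlim : Order.IsSuccLimit α) (ha : a ⊆ Set.Iio α)
    (hcof : ∀ ξ < α, ∃ η ∈ a, ξ < η) (hfin : (a \ C).Finite) : α ∈ C := by
  refine hC.2.2 α hα hlim (sSup_inter_Iio_eq fun ξ hξ => ?_)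
  obtain ⟨η, ⟨hηa, hηC⟩, hξη⟩ := exists_mem_diff_gt_of_finite ha hcof hfin ξ hξ
  exact ⟨η, not_not.1 fun h => hηC ⟨hηa, h⟩, hξη, ha hηa⟩

def csStrategy (γ : Ordinal → Ordinal) (a : Ordinal → Ordinal → Set Ordinal)
    (α : Ordinal) (A' B' : Set Ordinal) : Bool :=
  open Classical in decide (∃ β < γ α, (a α β ∩ A').Finite ∧ (a α β ∩ B').Infinite)

namespace CsWitness

variable {γ : Ordinal → Ordinal} {a : Ordinal → Ordinal → Set Ordinal}

lemma almost_comparable (hW : CsWitness γ a) {α β β' : Ordinal} (hα : α < omega1)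
    (hlim : Order.IsSuccLimit α) (hβ : β < γ α) (hβ' : β' < γ α) :
    (a α β \ a α β').Finite ∨ (a α β' \ a α β).Finite := by
  rcases lt_trichotomy β β' with hlt | rfl | hlt
  · exact Or.inr (hW.2.1 α hα hlim β β' hlt hβ')
  · simp
  · exact Or.inl (hW.2.1 α hα hlim β' β hlt hβ)

lemma exists_guess {C E : Set Ordinal} (hW : CsWitness γ a) (hC : IsClubSet C) (hE : IsStat E) :
    ∃ α β, α < omega1 ∧ Order.IsSuccLimit α ∧ α ∈ E ∧ α ∈ C ∧ β < γ α ∧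
      (a α β \ C).Finite ∧ (a α β ∩ E).Infinite := by
  obtain ⟨α, β, hα, hlim, hαE, hβ, hfin, hinf⟩ := hW.2.2 C E hC hE
  obtain ⟨hsub, hcof, -⟩ := (hW.1 α hα hlim).2 β hβ
  exact ⟨α, β, hα, hlim, hαE, hC.mem_of_finite_diff hα hlim hsub hcof hfin, hβ, hfin, hinf⟩

lemma mem_left_iff {A B : Set Ordinal} {α : Ordinal} (hW : CsWitness γ a)
    (hplay : PlayedBySplit (csStrategy γ a) A B) (hα : α < omega1) (hlim : Order.IsSuccLimit α)
    (hαE : α ∈ A ∪ B) :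
    α ∈ A ↔ ∃ β < γ α, (a α β ∩ A).Finite ∧ (a α β ∩ B).Infinite := by
  have hrestrict : ∀ β < γ α, ∀ X : Set Ordinal, a α β ∩ (X ∩ Set.Iio α) = a α β ∩ X :=
    fun β hβ X => by
      rw [← Set.inter_assoc, Set.inter_right_comm, Set.inter_eq_left.2 ((hW.1 α hα hlim).2 β hβ).1]
  rw [hplay α hαE]
  simp only [csStrategy, decide_eq_true_eq]
  refine exists_congr fun β => and_congr_right fun hβ => ?_
  rw [hrestrict β hβ, hrestrict β hβ]

variable {A B : Set Ordinal} (hW : CsWitness γ a) (hplay : PlayedBySplit (csStrategy γ a) A B)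
  (hE : IsStat (A ∪ B))
include hW hplay hE

lemma isStat_left (hA : A ⊆ Set.Iio omega1) : IsStat A := by
  refine ⟨hA, fun C hC => Set.nonempty_iff_ne_empty.2 fun hAC => ?_⟩
  obtain ⟨α, β, hα, hlim, hαE, hαC, hβ, hfin, hinf⟩ := hW.exists_guess hC hE
  have hfinA : (a α β ∩ A).Finite :=
    hfin.subset fun x hx => ⟨hx.1, fun hxC => hAC.subset ⟨hx.2, hxC⟩⟩
  have hαA : α ∈ A := (hW.mem_left_iff hplay hα hlim hαE).2
    ⟨β, hβ, hfinA, Set.infinite_inter_right_of_finite_left hinf hfinA⟩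
  exact hAC.subset ⟨hαA, hαC⟩

lemma isStat_right (hB : B ⊆ Set.Iio omega1) : IsStat B := by
  refine ⟨hB, fun C hC => Set.nonempty_iff_ne_empty.2 fun hBC => ?_⟩
  obtain ⟨α, β, hα, hlim, hαE, hαC, hβ, hfin, hinf⟩ := hW.exists_guess hC hE
  have hfinB : (a α β ∩ B).Finite :=
    hfin.subset fun x hx => ⟨hx.1, fun hxC => hBC.subset ⟨hx.2, hxC⟩⟩
  have hinfA : (a α β ∩ A).Infinite := by
    rw [Set.union_comm] at hinf
    exact Set.infinite_inter_right_of_finite_left hinf hfinB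
  have hαA : α ∈ A := hαE.resolve_right fun hαB => hBC.subset ⟨hαB, hαC⟩
  obtain ⟨β', hβ', hfinA', hinfB'⟩ := (hW.mem_left_iff hplay hα hlim hαE).1 hαA
  rcases hW.almost_comparable hα hlim hβ hβ' with hdiff | hdiff
  · exact hinfA (Set.finite_inter_of_finite_diff hdiff hfinA')
  · exact hinfB' (Set.finite_inter_of_finite_diff hdiff hfinB)

end CsWitness

/-- If the principle `C_s` holds, then Split has a winning strategy in the
stationary set splitting game `SG`. -/
theorem cs_implies_split_has_winning_strategy (h : Cs) :
    ∃ τ : Ordinal.{0} → Set Ordinal.{0} → Set Ordinal.{0} → Bool, SplitWinning τ := by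
  obtain ⟨γ, a, hW⟩ := h
  refine ⟨csStrategy γ a, fun A B ⟨hA, hB, _⟩ hplay => ?_⟩
  by_cases hE : IsStat (A ∪ B)
  · exact Or.inr ⟨hW.isStat_left hplay hE hA, hW.isStat_right hplay hE hB⟩
  · exact Or.inl hE

end
end

section
/- If the principle D_u holds, then Unsplit has a winning strategy in the stationary set splitting game SG. -/
noncomputable section

/-! Unsplit accepts `α` exactly when the `◊`-sequence guesses `A ∩ α`. The accepted set is then
the set of correct guesses of `A`, which is stationary by `◊`. The second clause of `D_u`, applied
to `A`, gives a club on which the correct guesses of `A` either all lie in `A`, so that `B` misses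
the club, or all lie outside `A`, so that `A` misses it. -/

def guessStrategy (σ : Ordinal → Set Ordinal) : Ordinal → Set Ordinal → Set Ordinal → Bool :=
  fun α A' _ => decide (A' = σ α)

theorem not_isStat_of_disjoint_club {S C : Set Ordinal} (hC : IsClubSet C) (hSC : Disjoint S C) :
    ¬ IsStat S :=
  fun hS => Set.disjoint_iff_inter_eq_empty.mp hSC ▸ hS.2 C hC |>.ne_empty rfl

theorem PlayedByUnsplit.union_eq_setOf_guess {σ : Ordinal → Set Ordinal} {A B : Set Ordinal}
    (hA : A ⊆ Set.Iio omega1) (hB : B ⊆ Set.Iio omega1)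
    (hplay : PlayedByUnsplit (guessStrategy σ) A B) :
    A ∪ B = {α | α < omega1 ∧ A ∩ Set.Iio α = σ α} := by
  ext α
  constructor
  · intro hα
    have hα₁ : α < omega1 := Set.union_subset hA hB hα
    exact ⟨hα₁, by simpa [guessStrategy] using (hplay α hα₁).1 hα⟩
  · rintro ⟨hα₁, hguess⟩
    exact (hplay α hα₁).2 (by simpa [guessStrategy] using hguess)

theorem unsplitWinning_guessStrategy {σ : Ordinal → Set Ordinal}
    (hdiamond : ∀ A : Set Ordinal, A ⊆ Set.Iio omega1 →
      IsStat {α | α < omega1 ∧ A ∩ Set.Iio α = σ α})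
    (hsettled : ∀ E : Set Ordinal, E ⊆ Set.Iio omega1 →
      ∃ C, IsClubSet C ∧
        ((∀ α ∈ C, E ∩ Set.Iio α = σ α → α ∈ E) ∨
         (∀ α ∈ C, E ∩ Set.Iio α = σ α → α ∉ E))) :
    UnsplitWinning (guessStrategy σ) := by
  rintro A B ⟨hA, hB, hAB⟩ hplay (hnonstat | ⟨hstatA, hstatB⟩)
  · exact hnonstat (hplay.union_eq_setOf_guess hA hB ▸ hdiamond A hA)
  have hguess : ∀ α ∈ A ∪ B, A ∩ Set.Iio α = σ α := fun α hα =>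
    ((hplay.union_eq_setOf_guess hA hB).subset hα).2
  obtain ⟨C, hC, hinside | houtside⟩ := hsettled A hA
  · refine not_isStat_of_disjoint_club hC (Set.disjoint_right.mpr fun α hαC hαB => ?_) hstatB
    exact hAB.ne_of_mem (hinside α hαC (hguess α (.inr hαB))) hαB rfl
  · refine not_isStat_of_disjoint_club hC (Set.disjoint_right.mpr fun α hαC hαA => ?_) hstatA
    exact houtside α hαC (hguess α (.inl hαA)) hαA

/-- If the principle `D_u` holds, then Unsplit has a winning strategy in the
stationary set splitting game `SG`. -/
theorem du_implies_unsplit_has_winning_strategy (h : Du) :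
    ∃ υ : Ordinal.{0} → Set Ordinal.{0} → Set Ordinal.{0} → Bool, UnsplitWinning υ := by
  obtain ⟨σ, -, hdiamond, hsettled⟩ := h
  exact ⟨guessStrategy σ, unsplitWinning_guessStrategy hdiamond hsettled⟩

end
end
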